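/- Given an instance of the 0-1 multiple knapsack problem with items of values v_i and weights w_i and knapsacks of capacities ĉ_j, construct an instance of P_sp with one service s_i per item (σ_{s_i} = w_i, total demand Σ_e λ_{e s_i} = v_i scaled so that r_{s_i}·Σ_e λ_{e s_i} = v_i) and one base station per knapsack with C_j = ĉ_j. Then a placement X is optimal for P_sp if and only if the corresponding assignment of items to knapsacks is optimal for the multiple knapsack instance, and the two optima have equal value. -/
import Mathlib


open Finset

variable {n m : ℕ}

/-- Feasibility for the constructed `P_sp` instance: the placement `x` (service
`i` placed on base station `j` iff `x j i`) respects the storage capacities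
`C j = ĉ j` (with `σ i = w i`) and places each service at most once. -/
def PspFeasible (w : Fin n → ℝ) (c : Fin m → ℝ) (x : Fin m → Fin n → Bool) : Prop :=
  (∀ j, ∑ i, (if x j i then w i else 0) ≤ c j) ∧
  (∀ i, ∑ j, (if x j i then (1 : ℕ) else 0) ≤ 1)

/-- Objective of the constructed `P_sp` instance: the value of service `i` is
`r i · Σ_e λ_{e i} = v i`. -/
def PspValue (v : Fin n → ℝ) (x : Fin m → Fin n → Bool) : ℝ :=
  ∑ j, ∑ i, (if x j i then v i else 0)

/-- Feasibility for the 0-1 multiple knapsack problem: `A i = some j` means item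
`i` is put in knapsack `j`; each knapsack capacity is respected. -/
def MKPFeasible (w : Fin n → ℝ) (c : Fin m → ℝ) (A : Fin n → Option (Fin m)) : Prop :=
  ∀ j, ∑ i, (if A i = some j then w i else 0) ≤ c j

/-- Total value of the items selected by the assignment `A`. -/
def MKPValue (v : Fin n → ℝ) (A : Fin n → Option (Fin m)) : ℝ :=
  ∑ i, (if (A i).isSome then v i else 0)

/-- The assignment of items to knapsacks corresponding to a placement `x`:
item `i` goes to (some) base station on which service `i` is placed, if any. -/
noncomputable def toAssignment (x : Fin m → Fin n → Bool) (i : Fin n) : Option (Fin m) :=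
  if h : ∃ j, x j i then some h.choose else none

lemma ta_spec {x : Fin m → Fin n → Bool} {i : Fin n} {j : Fin m}
    (h : toAssignment x i = some j) : x j i := by
  unfold toAssignment at h
  split at h
  · next he =>
    obtain rfl : he.choose = j := Option.some.inj h
    exact he.choose_spec
  · simp at h

lemma value_eq {v : Fin n → ℝ} {x : Fin m → Fin n → Bool}
    (hx : ∀ i, ∑ j, (if x j i then (1 : ℕ) else 0) ≤ 1) :
    MKPValue v (toAssignment x) = PspValue v x := by
  unfold MKPValue PspValue
  rw [Finset.sum_comm]
  refine Finset.sum_congr rfl fun i _ => ?_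
  by_cases h : ∃ j, x j i
  · obtain ⟨j₀, hj₀⟩ := h
    have hsome : toAssignment x i = some (⟨j₀, hj₀⟩ : ∃ j, x j i).choose := dif_pos _
    have huniq : ∀ j, x j i → j = j₀ := by
      intro j hj
      by_contra hne
      have h2 : (2 : ℕ) ≤ ∑ k, (if x k i then (1 : ℕ) else 0) := by
        calc (2 : ℕ) = ∑ k ∈ ({j, j₀} : Finset (Fin m)), (if x k i then (1 : ℕ) else 0) := by
              rw [Finset.sum_pair hne]; simp [hj, hj₀]
          _ ≤ _ := Finset.sum_le_sum_of_subset (Finset.subset_univ _)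
      exact absurd (h2.trans (hx i)) (by norm_num)
    have : ∑ j, (if x j i then v i else 0) = ∑ j, (if j = j₀ then v i else 0) := by
      refine Finset.sum_congr rfl fun j _ => ?_
      by_cases hj : x j i
      · rw [if_pos hj, if_pos (huniq j hj)]
      · rw [if_neg hj, if_neg (show ¬ j = j₀ from fun e => hj (e ▸ hj₀))]
    rw [this, Finset.sum_ite_eq' Finset.univ j₀ (fun _ => v i)]
    simp [hsome]
  · have hnone : toAssignment x i = none := dif_neg h
    push_neg at h
    simp [hnone, fun j => h j]

lemma fwd_feas {w : Fin n → ℝ} {c : Fin m → ℝ} {x : Fin m → Fin n → Bool}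
    (hw : ∀ i, 0 < w i) (hx : PspFeasible w c x) : MKPFeasible w c (toAssignment x) := by
  intro j
  refine le_trans (Finset.sum_le_sum fun i _ => ?_) (hx.1 j)
  by_cases h : toAssignment x i = some j
  · simp [h, ta_spec h]
  · simp only [h, if_false]
    split <;> simp [(hw i).le]

lemma bwd {v w : Fin n → ℝ} {c : Fin m → ℝ} {A : Fin n → Option (Fin m)}
    (hA : MKPFeasible w c A) :
    ∃ x, PspFeasible w c x ∧ PspValue v x = MKPValue v A := by
  refine ⟨fun j i => decide (A i = some j), ⟨fun j => ?_, fun i => ?_⟩, ?_⟩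
  · refine le_trans (le_of_eq (Finset.sum_congr rfl fun i _ => ?_)) (hA j)
    simp
  · rcases hAi : A i with _ | j₀
    · simp [hAi]
    · have : ∀ j : Fin m, (if decide (A i = some j) then (1:ℕ) else 0) = (if j = j₀ then 1 else 0) := by
        intro j; simp [hAi, eq_comm]
      calc (∑ j : Fin m, if decide (A i = some j) then (1:ℕ) else 0)
          = ∑ j : Fin m, (if j = j₀ then (1:ℕ) else 0) :=
            Finset.sum_congr rfl fun j _ => this j
        _ ≤ 1 := by rw [Finset.sum_ite_eq' Finset.univ j₀ (fun _ => (1:ℕ))]; simp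
  · unfold PspValue MKPValue
    rw [Finset.sum_comm]
    refine Finset.sum_congr rfl fun i _ => ?_
    rcases hAi : A i with _ | j₀
    · simp [hAi]
    · have : ∀ j : Fin m, (if decide (A i = some j) then v i else 0) = (if j = j₀ then v i else 0) := by
        intro j; simp [hAi, eq_comm]
      rw [Finset.sum_congr rfl fun j _ => this j, Finset.sum_ite_eq' Finset.univ j₀ (fun _ => v i)]
      simp [hAi]


/-- **Correctness of the reduction from 0-1 multiple knapsack to `P_sp`.**
Given an MKP instance with item values `v`, weights `w` and knapsack capacities
`c` (all positive), construct the `P_sp` instance with one service per item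
(storage `σ i = w i`, revenue times total demand equal to `v i`) and one base
station per knapsack (`C j = c j`).  Then the two problems have equal optimal
values, and a feasible placement `x` is optimal for `P_sp` if and only if the
corresponding item-to-knapsack assignment is optimal for the MKP instance. -/
theorem Psp_MKP_reduction (v w : Fin n → ℝ) (c : Fin m → ℝ)
    (hv : ∀ i, 0 < v i) (hw : ∀ i, 0 < w i) (hc : ∀ j, 0 < c j) :
    (sSup {t : ℝ | ∃ x, PspFeasible w c x ∧ PspValue v x = t} =
      sSup {t : ℝ | ∃ A, MKPFeasible w c A ∧ MKPValue v A = t}) ∧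
    (∀ x, PspFeasible w c x →
      (MKPFeasible w c (toAssignment x) ∧
        MKPValue v (toAssignment x) = PspValue v x ∧
        ((∀ x', PspFeasible w c x' → PspValue v x' ≤ PspValue v x) ↔
          (∀ A, MKPFeasible w c A → MKPValue v A ≤ MKPValue v (toAssignment x))))) := by
  constructor
  · congr 1
    ext t
    constructor
    · rintro ⟨x, hx, rfl⟩
      exact ⟨toAssignment x, fwd_feas hw hx, value_eq hx.2⟩
    · rintro ⟨A, hA, rfl⟩
      obtain ⟨x, hx, hval⟩ := bwd (v := v) hA
      exact ⟨x, hx, hval⟩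
  · intro x hx
    refine ⟨fwd_feas hw hx, value_eq hx.2, ?_, ?_⟩
    · intro hopt A hA
      obtain ⟨x', hx', hval⟩ := bwd (v := v) hA
      rw [value_eq hx.2, ← hval]
      exact hopt x' hx'
    · intro hopt x' hx'
      rw [← value_eq hx'.2, ← value_eq hx.2]
      exact hopt _ (fwd_feas hw hx')
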